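/- arXiv:1810.11642 — 9 statements merged into one kernel-verified Lean document; each statement's English description precedes it below -/
import Mathlib

section
/- Let p be a prime with p ≡ 1 (mod 4). Then ∏_{1 ≤ i < j ≤ (p-1)/2} (j² - i²) ≡ -((p-1)/2)! (mod p). -/
open Finset

/-- `k! * (p-1-k)! ≡ (-1)^(k+1) mod p`. -/
lemma factPair (p : ℕ) [hp : Fact p.Prime] :
    ∀ k, k ≤ p - 1 →
      ((Nat.factorial k : ZMod p)) * ((Nat.factorial (p - 1 - k) : ZMod p)) = (-1) ^ (k + 1) := by
  intro k
  induction k with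
  | zero => intro _; simp [ZMod.wilsons_lemma]
  | succ k ih =>
    intro hk
    have hp2 := hp.out.two_le
    have hk' : k ≤ p - 1 := by omega
    have ihk := ih hk'
    have h2 : ((p - 1 - k : ℕ) : ZMod p) = -((k : ZMod p) + 1) := by
      have h : p - 1 - k = p - (k + 1) := by omega
      rw [h, Nat.cast_sub (by omega)]
      push_cast
      simp
    have h3 : ((Nat.factorial (p - 1 - k) : ZMod p))
        = -((k : ZMod p) + 1) * ((Nat.factorial (p - 1 - (k + 1)) : ZMod p)) := by
      have h4 : p - 1 - k = (p - 1 - (k + 1)) + 1 := by omega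
      rw [h4, Nat.factorial_succ, Nat.cast_mul, ← h4, h2]
    rw [h3] at ihk
    rw [Nat.factorial_succ]
    push_cast
    calc ((k : ZMod p) + 1) * (Nat.factorial k : ZMod p)
          * ((Nat.factorial (p - 1 - (k + 1)) : ZMod p))
        = -((Nat.factorial k : ZMod p) * (-((k : ZMod p) + 1)
            * ((Nat.factorial (p - 1 - (k + 1)) : ZMod p)))) := by ring
      _ = -((-1) ^ (k + 1)) := by rw [ihk]
      _ = (-1) ^ (k + 1 + 1) := by ring

/-- The inner product identity over ℤ. -/
lemma innerProd (j : ℕ) (hj : 1 ≤ j) :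
    (j : ℤ) * ∏ i ∈ Finset.Ico 1 j, ((j : ℤ) ^ 2 - (i : ℤ) ^ 2)
      = (Nat.factorial (2 * j - 1) : ℤ) := by
  have hsplit : ∏ i ∈ Finset.Ico 1 j, ((j : ℤ) ^ 2 - (i : ℤ) ^ 2)
      = (∏ i ∈ Finset.Ico 1 j, ((j : ℤ) - i)) * (∏ i ∈ Finset.Ico 1 j, ((j : ℤ) + i)) := by
    rw [← Finset.prod_mul_distrib]
    exact Finset.prod_congr rfl fun i _ => by ring
  have hA : ∏ i ∈ Finset.Ico 1 j, ((j : ℤ) - i) = (Nat.factorial (j - 1) : ℤ) := by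
    rw [Finset.prod_Ico_eq_prod_range]
    have hr := Finset.prod_range_reflect (fun i => (i : ℤ) + 1) (j - 1)
    have hl : ∏ k ∈ Finset.range (j - 1), ((j : ℤ) - ((1 + k : ℕ) : ℤ))
        = ∏ i ∈ Finset.range (j - 1), (((j - 1 - 1 - i : ℕ) : ℤ) + 1) := by
      apply Finset.prod_congr rfl
      intro i hi
      have hi' := Finset.mem_range.mp hi
      push_cast
      omega
    rw [hl, hr]
    have h2 : ∏ i ∈ Finset.range (j - 1), ((i : ℤ) + 1)
        = ((∏ i ∈ Finset.range (j - 1), (i + 1) : ℕ) : ℤ) := by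
      push_cast
      rfl
    rw [h2, Finset.prod_range_add_one_eq_factorial]
  have hB : (Nat.factorial j : ℤ) * ∏ i ∈ Finset.Ico 1 j, ((j : ℤ) + i)
      = (Nat.factorial (2 * j - 1) : ℤ) := by
    have hB1 : ∏ i ∈ Finset.Ico 1 j, ((j : ℤ) + i)
        = ((∏ i ∈ Finset.Ico (j + 1) (2 * j), i : ℕ) : ℤ) := by
      rw [Nat.cast_prod, Finset.prod_Ico_eq_prod_range, Finset.prod_Ico_eq_prod_range]
      have : 2 * j - (j + 1) = j - 1 := by omega
      rw [this]
      apply Finset.prod_congr rfl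
      intro i _
      push_cast
      ring
    have hB2 : (∏ i ∈ Finset.Ico 1 (j + 1), i) * (∏ i ∈ Finset.Ico (j + 1) (2 * j), i)
        = ∏ i ∈ Finset.Ico 1 (2 * j), i :=
      Finset.prod_Ico_consecutive _ (by omega) (by omega)
    have hB3 : ∏ i ∈ Finset.Ico 1 (j + 1), i = Nat.factorial j :=
      Finset.prod_Ico_id_eq_factorial j
    have hB4 : ∏ i ∈ Finset.Ico 1 (2 * j), i = Nat.factorial (2 * j - 1) := by
      have h : 2 * j = (2 * j - 1) + 1 := by omega
      rw [h]
      exact Finset.prod_Ico_id_eq_factorial (2 * j - 1)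
    rw [hB1, ← Nat.cast_mul]
    congr 1
    rw [← hB4, ← hB2, hB3]
  have hjf : (j : ℤ) * (Nat.factorial (j - 1) : ℤ) = (Nat.factorial j : ℤ) := by
    rw [← Nat.cast_mul, Nat.mul_factorial_pred (by omega)]
  calc (j : ℤ) * ∏ i ∈ Finset.Ico 1 j, ((j : ℤ) ^ 2 - (i : ℤ) ^ 2)
      = ((j : ℤ) * (Nat.factorial (j - 1) : ℤ)) * ∏ i ∈ Finset.Ico 1 j, ((j : ℤ) + i) := by
        rw [hsplit, hA]; ring
    _ = (Nat.factorial (2 * j - 1) : ℤ) := by rw [hjf, hB]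

theorem stmt_1 (p : ℕ) (hp : p.Prime) (h4 : p % 4 = 1) :
    (∏ j ∈ Finset.Icc 1 ((p - 1) / 2), ∏ i ∈ Finset.Ico 1 j, ((j : ℤ) ^ 2 - (i : ℤ) ^ 2))
      ≡ -(Nat.factorial ((p - 1) / 2) : ℤ) [ZMOD p] := by
  haveI : Fact p.Prime := ⟨hp⟩
  have hp2 := hp.two_le
  set m := (p - 1) / 2 with hm
  have hp5 : 5 ≤ p := by
    rcases Nat.lt_or_ge p 5 with h | h
    · interval_cases p <;> omega
    · exact h
  have hmp : p = 2 * m + 1 := by omega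
  have hmeven : m % 2 = 0 := by omega
  rw [← ZMod.intCast_eq_intCast_iff]
  push_cast
  set P : ZMod p := ∏ j ∈ Icc 1 m, ∏ i ∈ Ico 1 j, ((j : ZMod p) ^ 2 - (i : ZMod p) ^ 2) with hP
  show P = -(Nat.factorial m : ZMod p)
  -- m! as a product
  have hfm : (Nat.factorial m : ZMod p) = ∏ j ∈ Icc 1 m, (j : ZMod p) := by
    rw [← Nat.cast_prod]
    congr 1
    rw [← Finset.Ico_add_one_right_eq_Icc]
    exact (Finset.prod_Ico_id_eq_factorial m).symm
  -- key: m! * P = ∏ (2j-1)!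
  have hkey : (Nat.factorial m : ZMod p) * P
      = ∏ j ∈ Icc 1 m, ((Nat.factorial (2 * j - 1) : ZMod p)) := by
    rw [hfm, hP, ← Finset.prod_mul_distrib]
    apply Finset.prod_congr rfl
    intro j hj
    have hj1 : 1 ≤ j := (Finset.mem_Icc.mp hj).1
    have := congrArg (fun z : ℤ => (z : ZMod p)) (innerProd j hj1)
    push_cast at this
    exact this
  -- the product of odd factorials is 1
  have hQ : ∏ j ∈ Icc 1 m, ((Nat.factorial (2 * j - 1) : ZMod p)) = 1 := by
    apply Finset.prod_involution (fun j _ => m + 1 - j)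
    · intro j hj
      have hj' := Finset.mem_Icc.mp hj
      have h1 : 2 * (m + 1 - j) - 1 = p - 1 - (2 * j - 1) := by omega
      rw [h1]
      have h2 := factPair p (2 * j - 1) (by omega)
      rw [h2]
      have h3 : 2 * j - 1 + 1 = 2 * j := by omega
      rw [h3]
      exact Even.neg_one_pow ⟨j, by ring⟩
    · intro j hj _
      have hj' := Finset.mem_Icc.mp hj
      omega
    · intro j hj
      have hj' := Finset.mem_Icc.mp hj
      simp only [Finset.mem_Icc]
      omega
    · intro j hj
      have hj' := Finset.mem_Icc.mp hj
      omega
  -- Wilson: (m!)^2 = -1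
  have hW : (Nat.factorial m : ZMod p) ^ 2 = -1 := by
    have hwil : ((Nat.factorial (p - 1) : ZMod p)) = -1 := ZMod.wilsons_lemma p
    have hsplitW : ((Nat.factorial (p - 1) : ZMod p))
        = (∏ k ∈ Ico 1 (m + 1), (k : ZMod p)) * (∏ k ∈ Ico (m + 1) (2 * m + 1), (k : ZMod p)) := by
      rw [Finset.prod_Ico_consecutive _ (by omega) (by omega)]
      rw [← Nat.cast_prod]
      congr 1
      have h : 2 * m + 1 = (p - 1) + 1 := by omega
      rw [h]
      exact (Finset.prod_Ico_id_eq_factorial (p - 1)).symm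
    have hsecond : (∏ k ∈ Ico (m + 1) (2 * m + 1), (k : ZMod p))
        = ∏ k ∈ Ico 1 (m + 1), -(k : ZMod p) := by
      apply Finset.prod_nbij' (fun k => p - k) (fun k => p - k)
      · intro a ha
        have := Finset.mem_Ico.mp ha
        simp only [Finset.mem_Ico]
        omega
      · intro a ha
        have := Finset.mem_Ico.mp ha
        simp only [Finset.mem_Ico]
        omega
      · intro a ha
        have := Finset.mem_Ico.mp ha
        omega
      · intro a ha
        have := Finset.mem_Ico.mp ha
        omega
      · intro a ha
        have ha' := Finset.mem_Ico.mp ha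
        rw [Nat.cast_sub (by omega)]
        simp
    have hneg : (∏ k ∈ Ico 1 (m + 1), -(k : ZMod p))
        = ∏ k ∈ Ico 1 (m + 1), (k : ZMod p) := by
      have : (∏ k ∈ Ico 1 (m + 1), -(k : ZMod p))
          = (-1) ^ (Ico 1 (m + 1)).card * ∏ k ∈ Ico 1 (m + 1), (k : ZMod p) := by
        rw [← Finset.prod_const, ← Finset.prod_mul_distrib]
        exact Finset.prod_congr rfl fun k _ => by ring
      rw [this, Nat.card_Ico]
      have hc : m + 1 - 1 = m := by omega
      rw [hc, Even.neg_one_pow ⟨m / 2, by omega⟩, one_mul]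
    have hfm' : (∏ k ∈ Ico 1 (m + 1), (k : ZMod p)) = (Nat.factorial m : ZMod p) := by
      rw [← Nat.cast_prod, Finset.prod_Ico_id_eq_factorial m]
    rw [hsplitW, hsecond, hneg, hfm'] at hwil
    rw [sq]
    exact hwil
  have hne : (Nat.factorial m : ZMod p) ≠ 0 := by
    intro h0
    have hz : (-1 : ZMod p) = 0 := by rw [← hW, h0]; ring
    have h1 : (1 : ZMod p) = 0 := by linear_combination -hz
    exact one_ne_zero h1
  apply mul_left_cancel₀ hne
  rw [hkey, hQ]
  calc (1 : ZMod p) = -(-1) := by ring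
    _ = -((Nat.factorial m : ZMod p) ^ 2) := by rw [hW]
    _ = (Nat.factorial m : ZMod p) * -(Nat.factorial m : ZMod p) := by ring
end

section
/- Let p > 3 be a prime with p ≡ 3 (mod 4). Then ∏_{1 ≤ i < j ≤ (p-1)/2} (j² - i²) ≡ 1 (mod p). -/
open Finset Nat

private lemma prod_Ico_sub_aux (j : ℕ) : ∏ i ∈ Finset.Ico 1 j, (j - i) = (j - 1)! := by
  rcases Nat.eq_zero_or_pos j with h | h
  · subst h; simp
  · have h1 : ∏ i ∈ Finset.Ico 1 j, (j - i) = ∏ i ∈ Finset.Ico 1 j, i := by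
      refine Finset.prod_nbij' (fun i => j - i) (fun i => j - i) ?_ ?_ ?_ ?_ ?_
      · intro a ha; simp only [Finset.mem_Ico] at *; omega
      · intro a ha; simp only [Finset.mem_Ico] at *; omega
      · intro a ha; simp only [Finset.mem_Ico] at ha; omega
      · intro a ha; simp only [Finset.mem_Ico] at ha; omega
      · intro a ha; rfl
    rw [h1]
    obtain ⟨n, rfl⟩ : ∃ n, j = n + 1 := ⟨j - 1, by omega⟩
    rw [Finset.prod_Ico_id_eq_factorial]
    simp

private lemma factorial_prod_add_aux (j : ℕ) (hj : 1 ≤ j) :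
    j ! * ∏ i ∈ Finset.Ico 1 j, (j + i) = (2 * j - 1)! := by
  have h1 : ∏ i ∈ Finset.Ico 1 j, (j + i) = ∏ k ∈ Finset.Ico (j + 1) (2 * j), k := by
    refine Finset.prod_nbij' (fun i => j + i) (fun k => k - j) ?_ ?_ ?_ ?_ ?_
    · intro a ha; simp only [Finset.mem_Ico] at *; omega
    · intro a ha; simp only [Finset.mem_Ico] at *; omega
    · intro a ha; simp only [Finset.mem_Ico] at ha; omega
    · intro a ha; simp only [Finset.mem_Ico] at ha; omega
    · intro a ha; rfl
  have h2 : j ! = ∏ k ∈ Finset.Ico 1 (j + 1), k :=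
    (Finset.prod_Ico_id_eq_factorial j).symm
  rw [h1, h2, Finset.prod_Ico_consecutive _ (by omega) (by omega)]
  have h3 : 2 * j = (2 * j - 1) + 1 := by omega
  rw [h3, Finset.prod_Ico_id_eq_factorial]
  simp

private lemma fact_pair_aux (p : ℕ) [Fact p.Prime] :
    ∀ t : ℕ, t < p → ((p - (t + 1))! : ZMod p) * (t ! : ZMod p) = (-1) ^ (t + 1) := by
  intro t
  induction t with
  | zero =>
    intro _
    simpa using ZMod.wilsons_lemma p
  | succ n ih =>
    intro h
    have hn := ih (by omega)
    have e1 : p - (n + 1) = (p - (n + 2)) + 1 := by omega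
    rw [e1, Nat.factorial_succ] at hn
    have e2 : ((p - (n + 2) + 1 : ℕ) : ZMod p) = -((n + 1 : ℕ) : ZMod p) := by
      have e3 : (p - (n + 2) + 1) = p - (n + 1) := by omega
      rw [e3, Nat.cast_sub (by omega)]
      simp
    rw [Nat.cast_mul, e2] at hn
    rw [Nat.factorial_succ, Nat.cast_mul]
    push_cast at hn ⊢
    ring_nf at hn ⊢
    linear_combination -hn

theorem stmt_2 (p : ℕ) (hp : p.Prime) (hgt : 3 < p) (h4 : p % 4 = 3) :
    (∏ j ∈ Finset.Icc 1 ((p - 1) / 2), ∏ i ∈ Finset.Ico 1 j, ((j : ℤ) ^ 2 - (i : ℤ) ^ 2))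
      ≡ 1 [ZMOD p] := by
  haveI : Fact p.Prime := ⟨hp⟩
  rw [← ZMod.intCast_eq_intCast_iff]
  push_cast
  set m := (p - 1) / 2 with hm
  obtain ⟨k, hk⟩ : ∃ k, p = 4 * k + 3 := ⟨p / 4, by omega⟩
  have hmk : m = 2 * k + 1 := by omega
  have hfactne : ∀ n : ℕ, n < p → ((n ! : ZMod p)) ≠ 0 := by
    intro n hn hz
    rw [ZMod.natCast_eq_zero_iff] at hz
    exact absurd ((Nat.Prime.dvd_factorial hp).mp hz) (by omega)
  have hinner : ∀ j ∈ Finset.Icc 1 m,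
      (∏ i ∈ Finset.Ico 1 j, ((j : ZMod p) ^ 2 - (i : ZMod p) ^ 2)) * (j ! : ZMod p)
        = ((j - 1)! : ZMod p) * ((2 * j - 1)! : ZMod p) := by
    intro j hj
    simp only [Finset.mem_Icc] at hj
    have h1 : ∏ i ∈ Finset.Ico 1 j, ((j : ZMod p) ^ 2 - (i : ZMod p) ^ 2)
        = (((∏ i ∈ Finset.Ico 1 j, (j - i)) : ℕ) : ZMod p)
          * (((∏ i ∈ Finset.Ico 1 j, (j + i)) : ℕ) : ZMod p) := by
      push_cast
      rw [← Finset.prod_mul_distrib]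
      refine Finset.prod_congr rfl ?_
      intro i hi
      simp only [Finset.mem_Ico] at hi
      rw [Nat.cast_sub (le_of_lt hi.2)]
      ring
    rw [h1, prod_Ico_sub_aux]
    have h2 := congrArg (fun n : ℕ => (n : ZMod p)) (factorial_prod_add_aux j hj.1)
    simp only [Nat.cast_mul] at h2
    linear_combination ((j - 1)! : ZMod p) * h2
  have htot : (∏ j ∈ Finset.Icc 1 m, ∏ i ∈ Finset.Ico 1 j, ((j : ZMod p) ^ 2 - (i : ZMod p) ^ 2))
      * ∏ j ∈ Finset.Icc 1 m, (j ! : ZMod p)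
      = (∏ j ∈ Finset.Icc 1 m, (((j - 1)! : ℕ) : ZMod p))
        * ∏ j ∈ Finset.Icc 1 m, (((2 * j - 1)! : ℕ) : ZMod p) := by
    rw [← Finset.prod_mul_distrib, ← Finset.prod_mul_distrib]
    exact Finset.prod_congr rfl hinner
  have htel : ∏ j ∈ Finset.Icc 1 m, (j ! : ZMod p)
      = (m ! : ZMod p) * ∏ j ∈ Finset.Icc 1 m, (((j - 1)! : ℕ) : ZMod p) := by
    have hstep : ∀ j ∈ Finset.Icc 1 m,
        (j ! : ZMod p) = (j : ZMod p) * (((j - 1)! : ℕ) : ZMod p) := by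
      intro j hj
      simp only [Finset.mem_Icc] at hj
      obtain ⟨n, rfl⟩ : ∃ n, j = n + 1 := ⟨j - 1, by omega⟩
      rw [Nat.factorial_succ]
      push_cast
      ring
    rw [Finset.prod_congr rfl hstep, Finset.prod_mul_distrib]
    congr 1
    rw [← Nat.cast_prod, ← Finset.Ico_add_one_right_eq_Icc, Finset.prod_Ico_id_eq_factorial]
  have hB : ∏ j ∈ Finset.Icc 1 m, (((2 * j - 1)! : ℕ) : ZMod p) = (m ! : ZMod p) := by
    have hc : (k + 1) ∈ Finset.Icc 1 m := by
      simp only [Finset.mem_Icc]; omega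
    rw [← Finset.mul_prod_erase _ _ hc]
    have hrest : ∏ j ∈ (Finset.Icc 1 m).erase (k + 1), (((2 * j - 1)! : ℕ) : ZMod p) = 1 := by
      refine Finset.prod_involution (fun a _ => 2 * k + 2 - a) ?_ ?_ ?_ ?_
      · intro a ha
        simp only [Finset.mem_erase, Finset.mem_Icc] at ha
        have h := fact_pair_aux p (2 * a - 1) (by omega)
        have e1 : 2 * a - 1 + 1 = 2 * a := by omega
        have e2 : 2 * (2 * k + 2 - a) - 1 = p - (2 * a) := by omega
        rw [e1] at h
        have hpow : ((-1 : ZMod p)) ^ (2 * a) = 1 := by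
          rw [pow_mul]; norm_num
        rw [hpow] at h
        rw [e2, mul_comm]
        exact h
      · intro a ha _
        simp only [Finset.mem_erase, Finset.mem_Icc] at ha
        omega
      · intro a ha
        simp only [Finset.mem_erase, Finset.mem_Icc] at ha
        show 2 * k + 2 - a ∈ (Finset.Icc 1 m).erase (k + 1)
        simp only [Finset.mem_erase, Finset.mem_Icc]
        omega
      · intro a ha
        simp only [Finset.mem_erase, Finset.mem_Icc] at ha
        show 2 * k + 2 - (2 * k + 2 - a) = a
        omega
    rw [hrest, mul_one]
    have e : 2 * (k + 1) - 1 = m := by omega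
    rw [e]
  have hQ : (∏ j ∈ Finset.Icc 1 m, (((j - 1)! : ℕ) : ZMod p)) ≠ 0 := by
    rw [Finset.prod_ne_zero_iff]
    intro j hj
    simp only [Finset.mem_Icc] at hj
    exact hfactne _ (by omega)
  have hM : (m ! : ZMod p) ≠ 0 := hfactne m (by omega)
  rw [htel, hB] at htot
  have h2 : (∏ j ∈ Finset.Icc 1 m, ∏ i ∈ Finset.Ico 1 j, ((j : ZMod p) ^ 2 - (i : ZMod p) ^ 2))
      * ((m ! : ZMod p) * ∏ j ∈ Finset.Icc 1 m, (((j - 1)! : ℕ) : ZMod p))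
      = 1 * ((m ! : ZMod p) * ∏ j ∈ Finset.Icc 1 m, (((j - 1)! : ℕ) : ZMod p)) := by
    rw [htot, one_mul]
    ring
  exact mul_right_cancel₀ (mul_ne_zero hM hQ) h2
end

section
/- Let p be a prime with p ≡ 1 (mod 8). Then ∏_{1 ≤ i < j ≤ p-1} (j - i) ≡ (-1)^{(p²-9)/8} · ((p-1)/2)! (mod p). -/
open Finset

/-- Inner product: `∏_{i=1}^{j-1} (j - i) = (j-1)!` in any commutative ring. -/
lemma aux_inner_prod {R : Type*} [CommRing R] (j : ℕ) (hj : 1 ≤ j) :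
    ∏ i ∈ Finset.Ico 1 j, ((j : R) - (i : R)) = ((j - 1).factorial : R) := by
  have h1 : ∀ i ∈ Finset.Ico 1 j, ((j : R) - (i : R)) = (((j - i : ℕ)) : R) := by
    intro i hi
    rw [Finset.mem_Ico] at hi
    rw [Nat.cast_sub (le_of_lt hi.2)]
  rw [Finset.prod_congr rfl h1,
    Finset.prod_Ico_reflect (fun i => ((i : ℕ) : R)) 1 (by omega : j ≤ j + 1)]
  simp only [Nat.add_sub_cancel_left, Nat.add_sub_cancel]
  rw [← Nat.cast_prod]
  have hj' : j = (j - 1) + 1 := by omega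
  rw [hj', Finset.prod_Ico_id_eq_factorial]
  norm_num

/-- Key pairing identity: `k! * (p-1-k)! = (-1)^(k+1)` in `ZMod p`. -/
lemma aux_fact_pair (p : ℕ) [Fact p.Prime] (k : ℕ) (hk : k ≤ p - 1) :
    ((k.factorial : ZMod p)) * (((p - 1 - k).factorial : ZMod p)) = (-1) ^ (k + 1) := by
  have hp2 : 2 ≤ p := (Fact.out : p.Prime).two_le
  induction k with
  | zero => simpa using ZMod.wilsons_lemma p
  | succ n ih =>
    have hn : n ≤ p - 1 := by omega
    have ih' := ih hn
    have hsub : p - 1 - n = (p - 1 - (n + 1)) + 1 := by omega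
    rw [hsub, Nat.factorial_succ] at ih'
    have hcast : ((p - 1 - (n + 1) : ℕ) : ZMod p) = -((n : ZMod p) + 2) := by
      have h1 : (p - 1 - (n + 1)) + (n + 2) = p := by omega
      have h2 := congrArg (fun t : ℕ => (t : ZMod p)) h1
      push_cast at h2
      rw [ZMod.natCast_self] at h2
      linear_combination h2
    rw [Nat.factorial_succ]
    push_cast at ih' ⊢
    linear_combination (-1 : ZMod p) * ih' +
      ((n.factorial : ZMod p) * ((p - 1 - (n + 1)).factorial : ZMod p)) * hcast

theorem stmt_4 (p : ℕ) (hp : p.Prime) (h8 : p % 8 = 1) :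
    (∏ j ∈ Finset.Icc 1 (p - 1), ∏ i ∈ Finset.Ico 1 j, ((j : ℤ) - (i : ℤ)))
      ≡ (-1) ^ ((p ^ 2 - 9) / 8) * (Nat.factorial ((p - 1) / 2) : ℤ) [ZMOD p] := by
  haveI : Fact p.Prime := ⟨hp⟩
  have hp2 : 2 ≤ p := hp.two_le
  obtain ⟨n, hpn⟩ : ∃ n, p = 8 * n + 1 := ⟨p / 8, by omega⟩
  have hn1 : 1 ≤ n := by omega
  -- the sum of exponents
  have hsum : ∑ k ∈ Finset.Ico 1 (4*n), (k+1) = (p^2 - 9)/8 := by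
    rw [Finset.sum_Ico_eq_sum_range]
    obtain ⟨m, rfl⟩ : ∃ m, n = m + 1 := ⟨n - 1, by omega⟩
    have e1 : 4*(m+1) - 1 = 4*m + 3 := by omega
    rw [e1]
    rw [Finset.sum_add_distrib, Finset.sum_add_distrib, Finset.sum_range_id]
    simp only [Finset.sum_const, Finset.card_range, smul_eq_mul, mul_one]
    have e2 : (4*m+3) * (4*m+3-1) / 2 = 8*(m*m) + 10*m + 3 := by
      have h3 : 4*m+3-1 = 4*m+2 := by omega
      have h4 : (4*m+3) * (4*m+2) = 2 * (8*(m*m) + 10*m + 3) := by ring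
      rw [h3, h4, Nat.mul_div_cancel_left _ (by norm_num : 0 < 2)]
    rw [e2]
    have hq : p^2 = 64*(m*m) + 144*m + 81 := by subst hpn; ring
    generalize m*m = s at hq ⊢
    omega
  -- pairing
  have hpair : ∀ k ∈ Finset.Ico 1 (4*n), ((k.factorial : ZMod p)) * (((8*n - k).factorial : ZMod p)) = (-1:ZMod p)^(k+1) := by
    intro k hk
    rw [Finset.mem_Ico] at hk
    have h1 : 8*n - k = p - 1 - k := by omega
    rw [h1]
    exact aux_fact_pair p k (by omega)
  -- reflection
  have hrefl : ∏ k ∈ Finset.Ico (4*n+1) (8*n), ((k.factorial : ZMod p))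
      = ∏ k ∈ Finset.Ico 1 (4*n), (((8*n - k).factorial : ZMod p)) := by
    rw [Finset.prod_Ico_reflect (fun k => ((k.factorial : ZMod p))) 1 (by omega : 4*n ≤ 8*n + 1)]
    have e1 : 8*n + 1 - 4*n = 4*n + 1 := by omega
    have e2 : 8*n + 1 - 1 = 8*n := by omega
    rw [e1, e2]
  -- main computation in ZMod p
  have main : ∏ k ∈ Finset.range (8*n), ((k.factorial : ZMod p))
      = (-1)^((p^2-9)/8) * (((4*n).factorial : ZMod p)) := by
    calc ∏ k ∈ Finset.range (8*n), ((k.factorial : ZMod p))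
        = ((Nat.factorial 0 : ZMod p)) * ∏ k ∈ Finset.Ico 1 (8*n), ((k.factorial : ZMod p)) := by
          rw [Finset.range_eq_Ico, Finset.prod_eq_prod_Ico_succ_bot (by omega : 0 < 8*n)]
      _ = ((Nat.factorial 0 : ZMod p)) * (((∏ k ∈ Finset.Ico 1 (4*n), ((k.factorial : ZMod p))) * (((4*n).factorial : ZMod p))) * ∏ k ∈ Finset.Ico (4*n+1) (8*n), ((k.factorial : ZMod p))) := by
          rw [← Finset.prod_Ico_consecutive (fun k => ((k.factorial : ZMod p))) (by omega : (1:ℕ) ≤ 4*n+1) (by omega : 4*n+1 ≤ 8*n),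
            Finset.prod_Ico_succ_top (by omega : (1:ℕ) ≤ 4*n)]
      _ = (((4*n).factorial : ZMod p)) * ∏ k ∈ Finset.Ico 1 (4*n), (((k.factorial : ZMod p)) * (((8*n - k).factorial : ZMod p))) := by
          rw [hrefl, Finset.prod_mul_distrib]
          simp only [Nat.factorial_zero, Nat.cast_one, one_mul]
          ring
      _ = (((4*n).factorial : ZMod p)) * ∏ k ∈ Finset.Ico 1 (4*n), (-1:ZMod p)^(k+1) := by
          rw [Finset.prod_congr rfl hpair]
      _ = (((4*n).factorial : ZMod p)) * (-1:ZMod p)^(∑ k ∈ Finset.Ico 1 (4*n), (k+1)) := by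
          rw [Finset.prod_pow_eq_pow_sum]
      _ = (-1)^((p^2-9)/8) * (((4*n).factorial : ZMod p)) := by
          rw [hsum]; ring
  -- transfer
  rw [← ZMod.intCast_eq_intCast_iff]
  push_cast
  have hinner : ∀ j ∈ Finset.Icc 1 (p-1), ∏ i ∈ Finset.Ico 1 j, ((j : ZMod p) - (i : ZMod p)) = (((j-1).factorial : ZMod p)) := by
    intro j hj
    rw [Finset.mem_Icc] at hj
    exact aux_inner_prod j hj.1
  rw [Finset.prod_congr rfl hinner]
  have hIcc : Finset.Icc 1 (p - 1) = Finset.Ico 1 p := by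
    rw [← Finset.Ico_add_one_right_eq_Icc]
    congr 1
    omega
  rw [hIcc, Finset.prod_Ico_eq_prod_range]
  simp only [Nat.add_sub_cancel_left]
  have h81 : p - 1 = 8*n := by omega
  have h4n : (p - 1)/2 = 4*n := by omega
  rw [h4n, h81]
  exact main
end

section
/- Let p be an odd prime, ζ = e^{2πi/(p-1)}, and define Υ(ζ) = ∏_{1 ≤ i < j ≤ (p-1)/2} (ζ^{2j} - ζ^{2i}). Then Υ(ζ)² = (-1)^{(p-1)(p-3)/8 + (p-3)(p+1)/4} · ((p-1)/2)^{(p-1)/2}. -/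
/-!
The number ω = ζ² is a primitive m-th root of unity, m = (p - 1)/2, and Υ(ζ) is the
Vandermonde product of the roots ω, ω², …, ω^m of f = X^m - 1. Up to the sign
(-1)^(m choose 2), its square is the product over all roots of f'(ω^j) = m ω^(j(m-1)),
and the product of the roots of f is (-1)^(m+1).
-/

open Finset Polynomial

section Vandermonde

variable {ι R : Type*} [LinearOrder ι] [CommRing R]

theorem Finset.sum_card_filter_lt_eq_choose_two (s : Finset ι) :
    ∑ j ∈ s, #{i ∈ s | i < j} = (#s).choose 2 := by
  induction s using Finset.induction_on_max with
  | empty => simp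
  | insert a s hlt ih =>
    have ha : a ∉ s := fun h => lt_irrefl a (hlt a h)
    have hbelow_a : {i ∈ insert a s | i < a} = s := by
      rw [filter_insert, if_neg (lt_irrefl a), filter_true_of_mem hlt]
    have hbelow : ∀ j ∈ s, {i ∈ insert a s | i < j} = {i ∈ s | i < j} := fun j hj => by
      rw [filter_insert, if_neg (hlt j hj).not_gt]
    rw [sum_insert ha, hbelow_a, sum_congr rfl fun j hj => congrArg card (hbelow j hj), ih,
      card_insert_of_notMem ha, Nat.choose_succ_succ, Nat.choose_one_right, add_comm]

theorem Finset.sq_prod_prod_filter_lt_sub (s : Finset ι) (v : ι → R) :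
    (∏ j ∈ s, ∏ i ∈ s with i < j, (v j - v i)) ^ 2
      = (-1) ^ (#s).choose 2 * ∏ j ∈ s, ∏ i ∈ s.erase j, (v j - v i) := by
  have hsplit : ∀ j ∈ s, ∏ i ∈ s.erase j, (v j - v i)
      = (∏ i ∈ s with i < j, (v j - v i)) * ∏ i ∈ s with j < i, (v j - v i) := fun j _ => by
    rw [← prod_union (disjoint_filter.2 fun i _ h h' => lt_asymm h h'), ← filter_or,
      ← filter_ne']
    simp_rw [ne_iff_lt_or_gt]
  have hswap : ∏ j ∈ s, ∏ i ∈ s with j < i, (v j - v i)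
      = ∏ j ∈ s, ∏ i ∈ s with i < j, (-1) * (v j - v i) := by
    rw [prod_comm' (t' := s) (s' := fun j => {i ∈ s | i < j}) (by simp only [mem_filter]; tauto)]
    exact prod_congr rfl fun _ _ => prod_congr rfl fun _ _ => by ring
  rw [prod_congr rfl hsplit, prod_mul_distrib, hswap]
  simp only [prod_mul_distrib, prod_const, prod_pow_eq_pow_sum, sum_card_filter_lt_eq_choose_two]
  have hsign : ((-1 : R) ^ (#s).choose 2) ^ 2 = 1 := by
    rw [← pow_mul, (even_two.mul_left _).neg_one_pow]
  linear_combination -(∏ j ∈ s, ∏ i ∈ s with i < j, (v j - v i)) ^ 2 * hsign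

end Vandermonde

namespace IsPrimitiveRoot

section CommRing

variable {R : Type*} [CommRing R] [IsDomain R] {m : ℕ} {ω : R}

theorem prod_Icc_X_sub_C_pow (hω : IsPrimitiveRoot ω m) (hm : 0 < m) :
    ∏ j ∈ Icc 1 m, (X - C (ω ^ j)) = X ^ m - 1 := by
  rw [← C_1, X_pow_sub_C_eq_prod hω hm (one_pow m), range_eq_Ico, prod_eq_prod_Ico_succ_bot hm,
    ← Ico_add_one_right_eq_Icc, prod_Ico_succ_top hm, hω.pow_eq_one, pow_zero, mul_comm]
  simp

theorem prod_Icc_pow (hω : IsPrimitiveRoot ω m) (hm : 0 < m) :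
    ∏ j ∈ Icc 1 m, ω ^ j = (-1) ^ (m + 1) := by
  have h := congrArg (eval 0) (hω.prod_Icc_X_sub_C_pow hm)
  simp only [eval_prod, eval_sub, eval_X, eval_pow, eval_C, eval_one, zero_sub,
    zero_pow hm.ne', prod_neg, Nat.card_Icc, Nat.add_sub_cancel] at h
  calc ∏ j ∈ Icc 1 m, ω ^ j = ((-1) ^ m) ^ 2 * ∏ j ∈ Icc 1 m, ω ^ j := by
        rw [← pow_mul, (even_two.mul_left _).neg_one_pow, one_mul]
    _ = (-1) ^ (m + 1) := by rw [sq, mul_assoc, h, pow_succ]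

end CommRing

variable {K : Type*} [Field K] {m : ℕ} {ω : K}

theorem prod_erase_Icc_pow_sub_pow (hω : IsPrimitiveRoot ω m) (hm : 0 < m) {j : ℕ}
    (hj : j ∈ Icc 1 m) :
    ∏ i ∈ (Icc 1 m).erase j, (ω ^ j - ω ^ i) = m * ω ^ (j * (m - 1)) := by
  have h := Lagrange.eval_nodal_derivative_eval_node_eq (v := (ω ^ ·)) hj
  rw [Lagrange.eval_nodal, Lagrange.nodal, hω.prod_Icc_X_sub_C_pow hm] at h
  simp [← h, derivative_X_pow, ← pow_mul]

theorem prod_prod_erase_Icc_pow_sub_pow (hω : IsPrimitiveRoot ω m) (hm : 0 < m) :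
    ∏ j ∈ Icc 1 m, ∏ i ∈ (Icc 1 m).erase j, (ω ^ j - ω ^ i)
      = (-1) ^ ((m + 1) * (m - 1)) * m ^ m := by
  rw [prod_congr rfl fun j => hω.prod_erase_Icc_pow_sub_pow hm, prod_mul_distrib, prod_const,
    Nat.card_Icc, Nat.add_sub_cancel]
  simp_rw [pow_mul]
  rw [prod_pow, hω.prod_Icc_pow hm, ← pow_mul, mul_comm]

theorem sq_prod_prod_Ico_pow_sub_pow (hω : IsPrimitiveRoot ω m) (hm : 0 < m) :
    (∏ j ∈ Icc 1 m, ∏ i ∈ Ico 1 j, (ω ^ j - ω ^ i)) ^ 2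
      = (-1) ^ (m.choose 2 + (m + 1) * (m - 1)) * m ^ m := by
  have hbelow : ∀ j ∈ Icc 1 m, Ico 1 j = {i ∈ Icc 1 m | i < j} := fun j hj => by
    ext i; simp only [mem_Ico, mem_filter, mem_Icc] at hj ⊢; omega
  rw [prod_congr rfl fun j hj => prod_congr (hbelow j hj) fun _ _ => rfl,
    sq_prod_prod_filter_lt_sub, Nat.card_Icc, Nat.add_sub_cancel,
    hω.prod_prod_erase_Icc_pow_sub_pow hm, pow_add, mul_assoc]

end IsPrimitiveRoot

theorem stmt_7 (p : ℕ) (hp : p.Prime) (hodd : Odd p) :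
    (∏ j ∈ Finset.Icc 1 ((p - 1) / 2), ∏ i ∈ Finset.Ico 1 j,
      (Complex.exp (2 * (Real.pi : ℂ) * Complex.I / ((p : ℂ) - 1)) ^ (2 * j)
        - Complex.exp (2 * (Real.pi : ℂ) * Complex.I / ((p : ℂ) - 1)) ^ (2 * i))) ^ 2
      = (-1 : ℂ) ^ ((p - 1) * (p - 3) / 8 + (p - 3) * (p + 1) / 4)
          * (((p : ℂ) - 1) / 2) ^ ((p - 1) / 2) := by
  obtain ⟨m, rfl⟩ := hodd
  have hm : 0 < m := by have := hp.two_le; omega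
  have hexp : (2 * m + 1 - 1) * (2 * m + 1 - 3) / 8 + (2 * m + 1 - 3) * (2 * m + 1 + 1) / 4
      = m.choose 2 + (m + 1) * (m - 1) := by
    obtain ⟨k, rfl⟩ := Nat.exists_eq_add_one.2 hm
    rw [Nat.choose_two_right, show 2 * (k + 1) + 1 - 3 = 2 * k by omega]
    simp only [Nat.add_sub_cancel]
    rw [show 2 * (k + 1) * (2 * k) = 4 * ((k + 1) * k) by ring,
      show 2 * k * (2 * (k + 1) + 1 + 1) = 4 * ((k + 1 + 1) * k) by ring]
    omega
  have hsub : ((2 * m + 1 : ℕ) : ℂ) - 1 = ((2 * m : ℕ) : ℂ) := by push_cast; ring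
  have hω := (Complex.isPrimitiveRoot_exp (2 * m) (by omega)).pow (by omega) rfl
  rw [hsub, hexp, show (2 * m + 1 - 1) / 2 = m by omega,
    show ((2 * m : ℕ) : ℂ) / 2 = m by push_cast; ring]
  simp_rw [pow_mul _ 2]
  exact hω.sq_prod_prod_Ico_pow_sub_pow hm
end

section
/- Let p be an odd prime and ζ = e^{2πi/(p-1)}. Then ∏_{1 ≤ i < j ≤ (p-1)/2} (ζ^{2j} - ζ^{2i}) = e^{(p-3)(3p+1)πi/16} · ((p-1)/2)^{(p-1)/4}. -/
/-!
Put n = (p - 1) / 2 and ω = exp (2πi / n), so that ζ² = ω. Each factor splits as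
ω^j - ω^i = exp (i ((i + j) π / n + π / 2)) · 2 sin ((j - i) π / n), the second factor being
nonnegative; the phases add up to (n - 1)(3n + 2) π / 4. Grouping the sines by d = j - i gives
P = ∏_d (2 sin (d π / n))^(n - d). Since sin (π - x) = sin x, the reflection d ↦ n - d shows
P² = (∏_d 2 sin (d π / n))^n = n^n, because ∏_d 2 sin (d π / n) is the norm of ∏_d (1 - ω^d) = n.
-/

open Finset Complex Real

theorem Finset.prod_Icc_prod_Ico_sub {M : Type*} [CommMonoid M] (g : ℕ → M) (n : ℕ) :
    ∏ j ∈ Icc 1 n, ∏ i ∈ Ico 1 j, g (j - i) = ∏ d ∈ Ico 1 n, g d ^ (n - d) := by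
  have hreflect (j : ℕ) : ∏ i ∈ Ico 1 j, g (j - i) = ∏ d ∈ Ico 1 j, g d := by
    simpa using prod_Ico_reflect g 1 (Nat.le_succ j)
  simp_rw [hreflect]
  rw [prod_comm' (s' := fun d => Ioc d n) (t' := Ico 1 n)
    (by intro j d; simp only [mem_Icc, mem_Ico, mem_Ioc]; omega)]
  simp

theorem Complex.exp_two_mul_I_sub_exp_two_mul_I (x y : ℝ) :
    exp (2 * x * I) - exp (2 * y * I)
      = exp ((x + y + π / 2 : ℝ) * I) * (2 * Real.sin (x - y) : ℝ) := by
  have hI : exp ((x + y + π / 2 : ℝ) * I) = exp ((x + y : ℂ) * I) * I := by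
    rw [show ((x + y + π / 2 : ℝ) : ℂ) * I = (x + y : ℂ) * I + π / 2 * I by push_cast; ring,
      exp_add, exp_pi_div_two_mul_I]
  have hx : exp ((x + y : ℂ) * I) * exp ((x - y : ℂ) * I) = exp (2 * x * I) := by
    rw [← exp_add]; ring_nf
  have hy : exp ((x + y : ℂ) * I) * exp (-(x - y : ℂ) * I) = exp (2 * y * I) := by
    rw [← exp_add]; ring_nf
  rw [hI, ofReal_mul, ofReal_sin, Complex.sin]
  push_cast
  linear_combination (exp ((x + y : ℂ) * I) * exp ((x - y : ℂ) * I)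
    - exp ((x + y : ℂ) * I) * exp (-(x - y : ℂ) * I)) * I_sq - hx + hy

theorem Real.sin_nat_mul_pi_div_nonneg {n d : ℕ} (hd : d ≤ n) :
    0 ≤ Real.sin (d * π / n) := by
  rcases Nat.eq_zero_or_pos n with rfl | hn
  · simp
  apply sin_nonneg_of_nonneg_of_le_pi (by positivity)
  rw [div_le_iff₀ (by positivity)]
  have : (d : ℝ) ≤ n := by exact_mod_cast hd
  nlinarith [pi_pos]

theorem Real.prod_Ico_two_mul_sin_pi_div {n : ℕ} (hn : n ≠ 0) :
    ∏ d ∈ Ico 1 n, 2 * Real.sin (d * π / n) = n := by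
  obtain ⟨m, rfl⟩ : ∃ m, n = m + 1 := ⟨n - 1, by omega⟩
  have hprod :=
    congrArg (‖·‖) (Complex.isPrimitiveRoot_exp (m + 1) hn).prod_one_sub_pow_eq_order
  have hterm (k : ℕ) (hk : k ∈ range m) :
      ‖1 - Complex.exp (2 * π * I / (m + 1 : ℕ)) ^ (k + 1)‖
        = 2 * Real.sin ((1 + k : ℕ) * π / (m + 1 : ℕ)) := by
    rw [← Complex.exp_nat_mul, ← Complex.exp_zero, show (0 : ℂ) = 2 * (0 : ℝ) * I by simp,
      show ((k + 1 : ℕ) : ℂ) * (2 * π * I / (m + 1 : ℕ))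
          = 2 * ((1 + k : ℕ) * π / (m + 1 : ℕ) : ℝ) * I by push_cast; ring,
      exp_two_mul_I_sub_exp_two_mul_I, norm_mul, norm_exp_ofReal_mul_I, one_mul, norm_real,
      zero_sub, Real.sin_neg, Real.norm_eq_abs, abs_mul, abs_neg, abs_two,
      abs_of_nonneg (Real.sin_nat_mul_pi_div_nonneg (by simp at hk; omega))]
  rw [norm_prod, prod_congr rfl hterm] at hprod
  rw [prod_Ico_eq_prod_range, Nat.add_sub_cancel, hprod]
  norm_cast

theorem Real.prod_Ico_two_mul_sin_pi_div_pow_sub {n : ℕ} (hn : n ≠ 0) :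
    ∏ d ∈ Ico 1 n, (2 * Real.sin (d * π / n)) ^ (n - d) = √n ^ n := by
  set f : ℕ → ℝ := fun d => 2 * Real.sin (d * π / n)
  have hf_nonneg : ∀ d ∈ Ico 1 n, 0 ≤ f d ^ (n - d) := fun d hd =>
    pow_nonneg (mul_nonneg zero_le_two (sin_nat_mul_pi_div_nonneg (mem_Ico.1 hd).2.le)) _
  have hreflect : ∏ d ∈ Ico 1 n, f d ^ (n - d) = ∏ d ∈ Ico 1 n, f d ^ d := by
    have := prod_Ico_reflect (fun d => f d ^ (n - d)) 1 (Nat.le_succ n)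
    rw [Nat.add_sub_cancel_left, Nat.add_sub_cancel] at this
    rw [← this]
    refine prod_congr rfl fun d hd => ?_
    have hdn : d ≤ n := (mem_Ico.1 hd).2.le
    rw [Nat.sub_sub_self hdn]
    simp only [f, Nat.cast_sub hdn, sub_mul, sub_div,
      mul_div_cancel_left₀ π (Nat.cast_ne_zero.2 hn), sin_pi_sub]
  have hsq : (∏ d ∈ Ico 1 n, f d ^ (n - d)) ^ 2 = (√n ^ n) ^ 2 := by
    rw [← pow_mul, mul_comm n 2, pow_mul, sq_sqrt n.cast_nonneg, sq]
    conv_lhs => enter [2]; rw [hreflect]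
    rw [← prod_mul_distrib, ← Real.prod_Ico_two_mul_sin_pi_div hn, ← prod_pow]
    refine prod_congr rfl fun d hd => ?_
    rw [← pow_add, Nat.sub_add_cancel (mem_Ico.1 hd).2.le]
  exact (pow_left_inj₀ (prod_nonneg hf_nonneg) (by positivity) two_ne_zero).1 hsq

theorem Finset.sum_Ico_one_succ_cast_add (k : ℕ) (a : ℝ) :
    ∑ i ∈ Ico 1 (k + 1), ((i : ℝ) + a) = k * (k + 1) / 2 + k * a := by
  induction k with
  | zero => simp
  | succ k ih =>
    rw [sum_Ico_succ_top (by omega), ih]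
    push_cast
    ring

theorem Finset.sum_Icc_sum_Ico_cast_add_add (m : ℕ) (c : ℝ) :
    ∑ j ∈ Icc 1 m, ∑ i ∈ Ico 1 j, ((i : ℝ) + j + c)
      = ((m : ℝ) ^ 3 - m) / 2 + c * m * (m - 1) / 2 := by
  induction m with
  | zero => simp
  | succ m ih =>
    simp_rw [sum_Icc_succ_top (Nat.le_add_left 1 m), ih, add_assoc, sum_Ico_one_succ_cast_add]
    push_cast
    ring

theorem Complex.prod_Icc_prod_Ico_exp_pow_sub_pow {n : ℕ} (hn : n ≠ 0) :
    ∏ j ∈ Icc 1 n, ∏ i ∈ Ico 1 j,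
      (Complex.exp (2 * π * I / n) ^ j - Complex.exp (2 * π * I / n) ^ i)
      = Complex.exp ((((n : ℝ) - 1) * (3 * n + 2) / 4 * π : ℝ) * I) * (√n ^ n : ℝ) := by
  have hpow (k : ℕ) :
      Complex.exp (2 * π * I / n) ^ k = Complex.exp (2 * (k * π / n : ℝ) * I) := by
    rw [← Complex.exp_nat_mul]
    congr 1
    push_cast
    ring
  set f : ℕ → ℝ := fun d => 2 * Real.sin (d * π / n) with hf
  have hterm (j i : ℕ) (hij : i ≤ j) :
      Complex.exp (2 * π * I / n) ^ j - Complex.exp (2 * π * I / n) ^ i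
        = Complex.exp ((((i : ℝ) + j + n / 2) * (π / n) : ℝ) * I) * f (j - i) := by
    rw [hpow, hpow, exp_two_mul_I_sub_exp_two_mul_I]
    simp only [hf, Nat.cast_sub hij]
    congr 4
    · field_simp
      ring
    · ring
  rw [prod_congr rfl fun j _ => prod_congr rfl fun i hi => hterm j i (mem_Ico.1 hi).2.le]
  simp only [prod_mul_distrib, ← Complex.exp_sum, ← sum_mul, ← ofReal_sum, ← ofReal_prod]
  rw [prod_Icc_prod_Ico_sub f, Real.prod_Ico_two_mul_sin_pi_div_pow_sub hn,
    sum_Icc_sum_Ico_cast_add_add]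
  congr 4
  field_simp
  ring

theorem stmt_8 (p : ℕ) (hp : p.Prime) (hodd : Odd p) :
    ∏ j ∈ Finset.Icc 1 ((p - 1) / 2), ∏ i ∈ Finset.Ico 1 j,
      (Complex.exp (2 * (Real.pi : ℂ) * Complex.I / ((p : ℂ) - 1)) ^ (2 * j)
        - Complex.exp (2 * (Real.pi : ℂ) * Complex.I / ((p : ℂ) - 1)) ^ (2 * i))
      = Complex.exp ((((p : ℂ) - 3) * (3 * (p : ℂ) + 1) / 16) * (Real.pi : ℂ) * Complex.I)
          * (((((p : ℝ) - 1) / 2) ^ (((p : ℝ) - 1) / 4) : ℝ) : ℂ) := by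
  obtain ⟨n, rfl⟩ := hodd
  have hn : n ≠ 0 := by rintro rfl; exact Nat.not_prime_one hp
  have hsq :
      Complex.exp (2 * π * I / ((2 * n + 1 : ℕ) - 1)) ^ 2 = Complex.exp (2 * π * I / n) := by
    rw [← Complex.exp_nat_mul]
    congr 1
    field_simp
    push_cast
    ring
  have hphase : (((2 * n + 1 : ℕ) : ℂ) - 3) * (3 * (2 * n + 1 : ℕ) + 1) / 16 * π * I
      = (((n : ℝ) - 1) * (3 * n + 2) / 4 * π : ℝ) * I := by
    push_cast
    ring
  have hmodulus :
      ((((2 * n + 1 : ℕ) : ℝ) - 1) / 2) ^ ((((2 * n + 1 : ℕ) : ℝ) - 1) / 4) = √n ^ n := by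
    rw [Real.sqrt_eq_rpow, ← Real.rpow_natCast, ← Real.rpow_mul n.cast_nonneg]
    push_cast
    ring_nf
  simp_rw [pow_mul, hsq, Nat.add_sub_cancel, Nat.mul_div_cancel_left n two_pos, hphase, hmodulus]
  exact Complex.prod_Icc_prod_Ico_exp_pow_sub_pow hn
end

section
/- Let p be an odd prime, g a primitive root of F_p, and let a be an integer with 1 ≤ a ≤ p-1 and gcd(a, p-1) = 1. Set h = (p-1)/2, let η_a be the permutation of ℤ/hℤ given by multiplication by a, and let ψ : ℤ/hℤ → H_p be the natural bijection (sending the residue of b with 1 ≤ b ≤ h to b ∈ H_p). Then τ_{g^a} = τ_g ∘ ψ ∘ η_a ∘ ψ^{-1}, where τ_g is the permutation of H_p = {1,...,(p-1)/2} ⊆ F_p defined by τ_g(b) = g^b if g^b ∈ H_p and τ_g(b) = -g^b otherwise. -/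
open scoped Classical in
/-- The map `τ_g` on `F_p`: `b ↦ g^b` if `g^b ∈ H_p`, and `b ↦ -g^b` otherwise,
where the exponent is the integer representative of `b`. -/
noncomputable def tauFun (p : ℕ) (g : ZMod p) (b : ZMod p) : ZMod p :=
  if g ^ b.val ∈ {x : ZMod p | 1 ≤ x.val ∧ x.val ≤ (p - 1) / 2} then
    g ^ b.val
  else
    -(g ^ b.val)

/-- The natural bijection `ψ : ℤ/hℤ → H_p` (with `h = (p-1)/2`), sending the residue class
of `b` with `1 ≤ b ≤ h` to `b ∈ F_p`. -/
def psi (p : ℕ) (x : ZMod ((p - 1) / 2)) : ZMod p :=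
  ((if x.val = 0 then (p - 1) / 2 else x.val : ℕ) : ZMod p)

open scoped Classical in
private lemma pick_neg (p : ℕ) (hp : p.Prime) (hodd : Odd p) (x : ZMod p) (hx : x ≠ 0) :
    (if (-x) ∈ {y : ZMod p | 1 ≤ y.val ∧ y.val ≤ (p - 1) / 2} then -x else -(-x))
    = (if x ∈ {y : ZMod p | 1 ≤ y.val ∧ y.val ≤ (p - 1) / 2} then x else -x) := by
  haveI : Fact p.Prime := ⟨hp⟩
  haveI : NeZero p := ⟨hp.ne_zero⟩
  have hp3 : 3 ≤ p := by
    rcases hodd with ⟨k, hk⟩; have := hp.two_le; omega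
  have hnx : (-x).val = p - x.val := by
    rw [ZMod.neg_val, if_neg hx]
  have hxv1 : 1 ≤ x.val := Nat.one_le_iff_ne_zero.mpr (fun h0 => hx ((ZMod.val_eq_zero x).mp h0))
  have hxvp : x.val < p := ZMod.val_lt x
  have hph : p = 2 * ((p - 1) / 2) + 1 := by rcases hodd with ⟨k, hk⟩; omega
  simp only [Set.mem_setOf_eq, hnx, neg_neg]
  by_cases hle : x.val ≤ (p - 1) / 2
  · rw [if_neg (by omega), if_pos ⟨hxv1, hle⟩]
  · rw [if_pos ⟨by omega, by omega⟩, if_neg (by omega)]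

theorem stmt_14 (p : ℕ) (hp : p.Prime) (hodd : Odd p) (g : ZMod p)
    (hg : orderOf g = p - 1) (a : ℕ) (ha1 : 1 ≤ a) (ha2 : a ≤ p - 1)
    (hcop : Nat.Coprime a (p - 1)) :
    ∀ b : ZMod p, b ∈ {x : ZMod p | 1 ≤ x.val ∧ x.val ≤ (p - 1) / 2} →
      tauFun p (g ^ a) b =
        tauFun p g (psi p ((a : ZMod ((p - 1) / 2)) * (b.val : ZMod ((p - 1) / 2)))) := by
  intro b hb
  haveI : Fact p.Prime := ⟨hp⟩
  have hp3 : 3 ≤ p := by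
    rcases hodd with ⟨k, hk⟩; have := hp.two_le; omega
  set h := (p - 1) / 2 with hh
  have hph : p = 2 * h + 1 := by rcases hodd with ⟨k, hk⟩; omega
  have hhpos : 0 < h := by omega
  haveI : NeZero h := ⟨by omega⟩
  have hgpow : g ^ (p - 1) = 1 := by rw [← hg]; exact pow_orderOf_eq_one g
  have hg0 : g ≠ 0 := by
    intro h0
    rw [h0, zero_pow (by omega)] at hgpow
    exact one_ne_zero hgpow.symm
  have hgh : g ^ h = -1 := by
    have h2 : g ^ h * g ^ h = 1 := by
      rw [← pow_add]
      have : h + h = p - 1 := by omega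
      rw [this, hgpow]
    rcases mul_self_eq_one_iff.mp h2 with h1 | h1
    · exfalso
      have hdvd := orderOf_dvd_of_pow_eq_one h1
      rw [hg] at hdvd
      have := Nat.le_of_dvd hhpos hdvd
      omega
    · exact h1
  set n := a * b.val with hn
  set r := n % h with hr
  set q := n / h with hq
  have hrval : ((a : ZMod h) * (b.val : ZMod h)).val = r := by
    rw [← Nat.cast_mul, ZMod.val_natCast]
  set c : ℕ := if r = 0 then h else r with hc
  have hrlt : r < h := Nat.mod_lt _ hhpos
  have hc1 : 1 ≤ c := by unfold c; split <;> omega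
  have hch : c ≤ h := by unfold c; split <;> omega
  have hcval : ((c : ℕ) : ZMod p).val = c := ZMod.val_cast_of_lt (by omega)
  have hpsi : psi p ((a : ZMod h) * (b.val : ZMod h)) = ((c : ℕ) : ZMod p) := by
    unfold psi
    rw [hrval]
  -- g ^ n = ± g ^ c
  have hsplit : g ^ n = g ^ c ∨ g ^ n = -(g ^ c) := by
    have hdm : n = h * q + r := (Nat.div_add_mod n h).symm
    have hgn : g ^ n = (-1) ^ q * g ^ r := by
      rw [hdm, pow_add, pow_mul, hgh]
    have hgc : g ^ c = g ^ r ∨ g ^ c = -(g ^ r) := by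
      unfold c
      by_cases hr0 : r = 0
      · right; rw [if_pos hr0, hr0, pow_zero, hgh]
      · left; rw [if_neg hr0]
    rcases Nat.even_or_odd q with hev | hod
    · rw [hgn, hev.neg_one_pow, one_mul]
      rcases hgc with h1 | h1
      · left; exact h1.symm
      · right; rw [h1, neg_neg]
    · rw [hgn, hod.neg_one_pow, neg_one_mul]
      rcases hgc with h1 | h1
      · right; rw [h1]
      · left; rw [h1]
  have hexp : (g ^ a) ^ b.val = g ^ n := (pow_mul g a b.val).symm
  have hgc0 : g ^ c ≠ 0 := pow_ne_zero _ hg0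
  rw [hpsi]
  unfold tauFun
  rw [hcval, hexp]
  rcases hsplit with heq | heq
  · rw [heq]
  · rw [heq]
    exact pick_neg p hp hodd (g ^ c) hgc0
end

section
/- Let h > 1 be an odd integer that is not a perfect square, and let p = 2h + 1. Then there exists an integer a with 1 ≤ a ≤ p-1, gcd(a, p-1) = 1, and Jacobi symbol (a/h) = -1. -/
-- Auxiliary lemma: an odd non-square `h > 1` admits `x` coprime to `h`
-- with Jacobi symbol `J(x|h) = -1`.
lemma aux_exists_jacobi_neg_one (h : ℕ) (h1 : 1 < h) (hodd : Odd h)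
    (hns : ¬ ∃ m : ℕ, h = m ^ 2) : ∃ x : ℕ, jacobiSym (x : ℤ) h = -1 := by
  have hh0 : h ≠ 0 := by omega
  -- find a prime q with odd exponent in h
  obtain ⟨s, t, hst, hs⟩ := Nat.sq_mul_squarefree h
  have hs1 : s ≠ 1 := by
    rintro rfl
    exact hns ⟨t, by omega⟩
  obtain ⟨q, hq, hqs⟩ := Nat.exists_prime_and_dvd hs1
  have hs0 : s ≠ 0 := by
    rintro rfl; simp at hst; omega
  have ht0 : t ≠ 0 := by
    rintro rfl; simp at hst; omega
  have hqh : q ∣ h := hqs.trans ⟨t ^ 2, by rw [← hst]; ring⟩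
  have hq2 : q ≠ 2 := by
    rintro rfl
    rcases hodd with ⟨k, hk⟩
    omega
  haveI : Fact q.Prime := ⟨hq⟩
  set e := h.factorization q with he
  have heodd : Odd e := by
    have h1' : s.factorization q = 1 :=
      Nat.factorization_eq_one_of_squarefree hs hq hqs
    have : h.factorization q = 2 * t.factorization q + s.factorization q := by
      rw [← hst, Nat.factorization_mul (pow_ne_zero 2 ht0) hs0,
        Nat.factorization_pow]
      simp [mul_comm]
    rw [he, this, h1']
    exact ⟨t.factorization q, by ring⟩
  have he0 : e ≠ 0 := by
    rcases heodd with ⟨k, hk⟩; omega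
  set m := ordCompl[q] h with hm
  have hm0 : m ≠ 0 := (Nat.ordCompl_pos q hh0).ne'
  have hqm : Nat.Coprime q m := Nat.coprime_ordCompl hq hh0
  have hsplit : q ^ e * m = h := Nat.ordProj_mul_ordCompl_eq_self h q
  -- nonresidue mod q
  have hchar : ringChar (ZMod q) ≠ 2 := by
    rw [ZMod.ringChar_zmod_n]; exact hq2
  obtain ⟨u, hu⟩ := FiniteField.exists_nonsquare hchar
  have hleg : legendreSym q (u.val : ℕ) = -1 := by
    rw [legendreSym.eq_neg_one_iff']
    rwa [ZMod.natCast_val, ZMod.cast_id]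
  -- CRT
  have hcop : Nat.Coprime (q ^ e) m := hqm.pow_left e
  obtain ⟨x, hx1, hx2⟩ := Nat.chineseRemainder hcop u.val 1
  refine ⟨x, ?_⟩
  have hq0e : q ^ e ≠ 0 := pow_ne_zero e hq.pos.ne'
  haveI : NeZero (q ^ e) := ⟨hq0e⟩
  haveI : NeZero m := ⟨hm0⟩
  have hxq : x ≡ u.val [MOD q] := hx1.of_dvd (dvd_pow_self q he0)
  have J1 : jacobiSym (x : ℤ) q = -1 := by
    have : ((x : ℤ) % q) = ((u.val : ℤ) % q) := by
      have := hxq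
      unfold Nat.ModEq at this
      exact_mod_cast congrArg (Nat.cast : ℕ → ℤ) this
    rw [jacobiSym.mod_left' this, ← jacobiSym.legendreSym.to_jacobiSym]
    exact hleg
  have J2 : jacobiSym (x : ℤ) m = 1 := by
    have : ((x : ℤ) % m) = ((1 : ℤ) % m) := by
      have := hx2
      unfold Nat.ModEq at this
      exact_mod_cast congrArg (Nat.cast : ℕ → ℤ) this
    rw [jacobiSym.mod_left' this, jacobiSym.one_left]
  calc jacobiSym (x : ℤ) h = jacobiSym (x : ℤ) (q ^ e * m) := by rw [hsplit]
    _ = jacobiSym (x : ℤ) (q ^ e) * jacobiSym (x : ℤ) m :=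
        jacobiSym.mul_right _ _ _
    _ = (jacobiSym (x : ℤ) q) ^ e * 1 := by rw [jacobiSym.pow_right, J2]
    _ = -1 := by rw [J1, heodd.neg_one_pow, mul_one]

theorem stmt_16 (h : ℕ) (h1 : 1 < h) (hodd : Odd h) (hns : ¬ ∃ m : ℕ, h = m ^ 2) :
    ∃ a : ℕ, 1 ≤ a ∧ a ≤ (2 * h + 1) - 1 ∧ Nat.Coprime a ((2 * h + 1) - 1) ∧
      jacobiSym (a : ℤ) h = -1 := by
  obtain ⟨x, hx⟩ := aux_exists_jacobi_neg_one h h1 hodd hns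
  have hh0 : h ≠ 0 := by omega
  haveI : NeZero h := ⟨hh0⟩
  -- x is coprime to h since J(x|h) ≠ 0
  have hcop : Nat.Coprime x h := by
    by_contra hc
    have : jacobiSym (x : ℤ) h = 0 := by
      rw [jacobiSym.eq_zero_iff_not_coprime]
      rwa [Int.gcd_natCast_natCast]
    omega
  set r := x % h with hr
  have hrh : r < h := Nat.mod_lt _ (by omega)
  have hrcop : Nat.Coprime r h := by
    have := hcop
    rw [Nat.coprime_comm] at this
    rwa [Nat.Coprime, ← Nat.gcd_rec]
  have hr0 : r ≠ 0 := by
    rintro h0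
    have := hrcop
    rw [h0] at this
    simp [Nat.Coprime] at this
    omega
  have hJr : jacobiSym (r : ℤ) h = -1 := by
    have : ((x : ℤ) % h) = ((r : ℤ) % h) := by
      push_cast [hr]
      simp [Int.emod_emod_of_dvd]
    rw [← jacobiSym.mod_left' this]
    exact hx
  have hsub : (2 * h + 1) - 1 = 2 * h := by omega
  rcases Nat.even_or_odd r with hre | hro
  · -- r even: use r + h
    refine ⟨r + h, by omega, by omega, ?_, ?_⟩
    · rw [hsub]
      have hodd' : Odd (r + h) := hre.add_odd hodd
      have c2 : Nat.Coprime (r + h) 2 := hodd'.coprime_two_right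
      have ch : Nat.Coprime (r + h) h := Nat.coprime_add_self_left.mpr hrcop
      exact Nat.Coprime.mul_right c2 ch
    · have : (((r + h : ℕ) : ℤ)) % h = ((r : ℤ)) % h := by
        push_cast
        simp [Int.add_mul_emod_self_left]
      rw [jacobiSym.mod_left' this]
      exact hJr
  · -- r odd: use r
    refine ⟨r, by omega, by omega, ?_, hJr⟩
    rw [hsub]
    have c2 : Nat.Coprime r 2 := hro.coprime_two_right
    exact Nat.Coprime.mul_right c2 hrcop
end

section
/- Let h be an odd positive integer and let a be an integer coprime to h. Then the sign of the permutation of ℤ/hℤ given by multiplication by a equals the Jacobi symbol (a/h). -/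
/-!
Write `x : ZMod (p * m)` in mixed radix as `y + m * z` with `y : ZMod m` and `z : ZMod p`. Then
multiplication by `a` becomes the shear `(y, z) ↦ (a * y, c y + a * z)`, where `c y` is the carry
of `a * y` modulo `m`. Since `p` and `m` are odd, translations are even permutations, so the sign
is multiplicative in the modulus, as is the Jacobi symbol. For a prime `p`, both
`u ↦ sign (u * ·)` and the Legendre symbol are nontrivial homomorphisms from the cyclic group
`(ZMod p)ˣ` to `ℤˣ`, hence equal.
-/

open Equiv Equiv.Perm

theorem Int.units_pow_of_odd (u : ℤˣ) {n : ℕ} (hn : Odd n) : u ^ n = u := by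
  rw [Int.units_pow_eq_pow_mod_two, Nat.odd_iff.mp hn, pow_one]

theorem Equiv.Perm.sign_addLeft_of_odd_card {A : Type*} [AddGroup A] [Fintype A] [DecidableEq A]
    (hA : Odd (Fintype.card A)) (c : A) : sign (Equiv.addLeft c) = 1 := by
  rw [← Int.units_pow_of_odd (sign _) hA, ← map_pow, nsmul_addLeft, card_nsmul_eq_zero,
    addLeft_zero, map_one]

theorem Equiv.Perm.sign_prodShear {α β : Type*} [Fintype α] [DecidableEq α] [Fintype β]
    [DecidableEq β] (τ : Perm α) (f : α → Perm β) :
    sign (prodShear τ f) = sign τ ^ Fintype.card β * ∏ a, sign (f a) := by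
  have : prodShear τ f = prodCongrLeft (fun _ => τ) * prodCongrRight f := rfl
  rw [this, map_mul, sign_prodCongrLeft, sign_prodCongrRight, Finset.prod_const, Finset.card_univ]

theorem MonoidHom.eq_of_ne_one_of_isCyclic {G : Type*} [Group G] [IsCyclic G] {χ ψ : G →* ℤˣ}
    (hχ : χ ≠ 1) (hψ : ψ ≠ 1) : χ = ψ := by
  obtain ⟨g, hg⟩ := IsCyclic.exists_generator (α := G)
  have ext_of_generator : ∀ φ φ' : G →* ℤˣ, φ g = φ' g → φ = φ' := fun φ φ' h => by
    ext x
    obtain ⟨k, rfl⟩ := hg x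
    simp [h]
  have apply_generator : ∀ φ : G →* ℤˣ, φ ≠ 1 → φ g = -1 := fun φ hφ =>
    (Int.units_eq_one_or _).resolve_left fun h => hφ (ext_of_generator _ _ h)
  exact ext_of_generator _ _ ((apply_generator χ hχ).trans (apply_generator ψ hψ).symm)

namespace FiniteField

variable {F : Type*} [Field F] [Fintype F] [DecidableEq F]

theorem sign_toPerm_generator (hF : ringChar F ≠ 2) {g : Fˣ}
    (hg : ∀ x, x ∈ Subgroup.zpowers g) : sign (MulAction.toPerm g : Perm F) = -1 := by
  have hg1 : (g : F) ≠ 1 := by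
    intro h
    obtain ⟨k, hk⟩ := hg (-1)
    apply Ring.neg_one_ne_one_of_char_ne_two hF
    simpa [h] using congrArg Units.val hk.symm
  have hsupp : (MulAction.toPerm g : Perm F).support = Finset.univ.erase 0 := by
    ext x
    simp [Units.smul_def, mul_left_eq_self₀, hg1]
  have hcycle : (MulAction.toPerm g : Perm F).IsCycle := by
    refine ⟨1, by simpa [Units.smul_def] using hg1, fun y hy => ?_⟩
    obtain ⟨k, hk⟩ := hg (Units.mk0 y (by rintro rfl; simp at hy))
    refine ⟨k, ?_⟩
    change (MulAction.toPermHom Fˣ F g ^ k) 1 = y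
    rw [← map_zpow]
    simpa [Units.smul_def, Units.ext_iff] using congrArg Units.val hk
  have hcard := odd_card_of_char_ne_two hF
  rw [hcycle.sign, hsupp, Finset.card_erase_of_mem (Finset.mem_univ _), Finset.card_univ,
    Even.neg_one_pow (Nat.even_iff.mpr (by omega))]

theorem sign_mulLeft_eq_quadraticChar (hF : ringChar F ≠ 2) (u : Fˣ) {σ : Perm F}
    (hσ : ∀ x, σ x = u * x) : (sign σ : ℤ) = quadraticChar F u := by
  obtain rfl : σ = MulAction.toPerm u := Equiv.ext hσ
  obtain ⟨g, hg⟩ := IsCyclic.exists_generator (α := Fˣ)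
  have hsign : sign.comp (MulAction.toPermHom Fˣ F) = (quadraticChar F).toUnitHom := by
    refine MonoidHom.eq_of_ne_one_of_isCyclic (fun h => ?_) (fun h => ?_)
    · have := DFunLike.congr_fun h g
      simp [sign_toPerm_generator hF hg] at this
    · obtain ⟨a, ha⟩ := quadraticChar_exists_neg_one' hF
      have := congrArg Units.val (DFunLike.congr_fun h a)
      rw [MulChar.coe_toUnitHom, ha] at this
      simp at this
  rw [← MulChar.coe_toUnitHom, ← hsign]
  rfl

end FiniteField

namespace ZMod

def ofDigits (m n : ℕ) (p : ZMod m × ZMod n) : ZMod (n * m) :=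
  ((p.1.val + m * p.2.val : ℕ) : ZMod (n * m))

variable {m n : ℕ} [NeZero m] [NeZero n]

theorem ofDigits_injective : Function.Injective (ofDigits m n) := by
  rintro ⟨y, z⟩ ⟨y', z'⟩ h
  have hm : 0 < m := Nat.pos_of_ne_zero (NeZero.ne m)
  have hlt : ∀ (y : ZMod m) (z : ZMod n), y.val + m * z.val < n * m := fun y z => by
    have := y.val_lt; have := z.val_lt
    nlinarith
  have hval := congrArg ZMod.val h
  simp only [ofDigits, ZMod.val_cast_of_lt (hlt _ _)] at hval
  obtain ⟨hz, hy⟩ := (Nat.div_mod_unique hm).mpr ⟨hval, y.val_lt⟩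
  rw [Nat.add_mul_div_left _ _ hm, Nat.div_eq_of_lt y'.val_lt, zero_add] at hz
  rw [Nat.add_mul_mod_self_left, Nat.mod_eq_of_lt y'.val_lt] at hy
  simp [ZMod.val_injective _ hy, ZMod.val_injective _ hz]

noncomputable def digitsEquiv (m n : ℕ) [NeZero m] [NeZero n] : ZMod m × ZMod n ≃ ZMod (n * m) :=
  Equiv.ofBijective (ofDigits m n) <| (Fintype.bijective_iff_injective_and_card _).mpr
    ⟨ofDigits_injective, by simp [ZMod.card, mul_comm]⟩

theorem intCast_mul_ofDigits (a : ℤ) (y : ZMod m) (z : ZMod n) :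
    (a : ZMod (n * m)) * ofDigits m n (y, z) =
      ofDigits m n (a * y, ((a * y.val / m : ℤ) : ZMod n) + a * z) := by
  set q := a * y.val / m
  have hy : ((a * y : ZMod m).val : ℤ) = a * y.val % m := by
    rw [← ZMod.val_intCast]; simp
  have hz : ((q + a * z : ZMod n).val : ℤ) = (q + a * z.val) % n := by
    rw [← ZMod.val_intCast]; simp
  have key : ((a * (y.val + m * z.val : ℤ) : ℤ) : ZMod (n * m)) =
      (((a * y : ZMod m).val + m * (q + a * z : ZMod n).val : ℤ) : ZMod (n * m)) := by
    rw [ZMod.intCast_eq_intCast_iff_dvd_sub, hy, hz]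
    refine ⟨- ((q + a * z.val) / n), ?_⟩
    have h1 := Int.emod_add_mul_ediv (a * y.val) m
    have h2 := Int.emod_add_mul_ediv (q + a * z.val) n
    push_cast
    linear_combination h1 + m * h2
  simpa [ofDigits] using key

theorem sign_mulLeft_mul (hm : Odd m) (hn : Odd n) {a : ℤ} {σ : Perm (ZMod (n * m))}
    {τ : Perm (ZMod m)} {ρ : Perm (ZMod n)} (hσ : ∀ x, σ x = a * x) (hτ : ∀ y, τ y = a * y)
    (hρ : ∀ z, ρ z = a * z) : sign σ = sign τ * sign ρ := by
  let carry (y : ZMod m) : ZMod n := ((a * y.val / m : ℤ) : ZMod n)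
  have hshear : sign (prodShear τ fun y => Equiv.addLeft (carry y) * ρ) = sign σ :=
    sign_eq_sign_of_equiv _ _ (digitsEquiv m n) fun ⟨y, z⟩ => by
      simp [digitsEquiv, hσ, hτ, hρ, intCast_mul_ofDigits, carry]
  rw [← hshear, sign_prodShear]
  simp [sign_addLeft_of_odd_card (by rwa [ZMod.card] : Odd (Fintype.card (ZMod n))),
    ZMod.card, Int.units_pow_of_odd _ hn, Int.units_pow_of_odd _ hm]

end ZMod

theorem stmt_17 (h : ℕ) [NeZero h] (hodd : Odd h) (a : ℤ) (hcop : IsCoprime a (h : ℤ))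
    (σ : Equiv.Perm (ZMod h)) (hσ : ∀ x : ZMod h, σ x = (a : ZMod h) * x) :
    (Equiv.Perm.sign σ : ℤ) = jacobiSym a h := by
  revert ‹NeZero h› σ
  induction h using induction_on_primes with
  | zero => exact absurd hodd (by decide)
  | one => intro _ σ _; rw [Subsingleton.elim σ 1, map_one, jacobiSym.one_right]; rfl
  | prime_mul p m hp ih =>
    intro _ σ hσ
    have : Fact p.Prime := ⟨hp⟩
    have : NeZero m := ⟨right_ne_zero_of_mul (NeZero.ne (p * m))⟩
    obtain ⟨hp_odd, hm_odd⟩ := Nat.odd_mul.mp hodd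
    obtain ⟨hcop_p, hcop_m⟩ := IsCoprime.mul_right_iff.mp (by rwa [Nat.cast_mul] at hcop)
    rw [ZMod.sign_mulLeft_mul hm_odd hp_odd hσ (τ := Units.mulLeft (ZMod.unitOfIsCoprime a hcop_m))
      (ρ := Units.mulLeft (ZMod.unitOfIsCoprime a hcop_p)) (fun _ => rfl) (fun _ => rfl)]
    have hp2 : ringChar (ZMod p) ≠ 2 := by
      rw [ZMod.ringChar_zmod_n]; rintro rfl; exact absurd hp_odd (by decide)
    rw [Units.val_mul, ih hm_odd hcop_m _ (fun _ => rfl),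
      FiniteField.sign_mulLeft_eq_quadraticChar hp2 _ (fun _ => rfl), jacobiSym.mul_right,
      ← jacobiSym.legendreSym.to_jacobiSym p, mul_comm]
    rfl
end

section
/- Let n be a positive integer such that p = 18(2n+1)² + 1 is prime. Then the Legendre symbol (6n+3 / p) equals (-1)^{n+1}. -/
theorem stmt_18 (n : ℕ) (hn : 0 < n) (hp : (18 * (2 * n + 1) ^ 2 + 1).Prime) :
    @legendreSym (18 * (2 * n + 1) ^ 2 + 1) ⟨hp⟩ ((6 * n + 3 : ℕ) : ℤ) = (-1) ^ (n + 1) := by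
  rw [@jacobiSym.legendreSym.to_jacobiSym (18 * (2 * n + 1) ^ 2 + 1) ⟨hp⟩ ((6 * n + 3 : ℕ) : ℤ)]
  set m := 2 * n + 1 with hm
  set p := 18 * m ^ 2 + 1 with hpd
  have hmo : Odd m := ⟨n, by omega⟩
  have hmm : Odd (m * m) := hmo.mul hmo
  obtain ⟨t, ht⟩ : ∃ t, p = 18 * t + 1 ∧ Odd t := ⟨m * m, by ring, hmm⟩
  have hpo : Odd p := by rcases ht.2 with ⟨j, hj⟩; exact ⟨9 * (2 * j + 1), by omega⟩
  have hhalf : p / 2 = 9 * t := by omega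
  have hhodd : Odd (p / 2) := by
    rw [hhalf]; exact (by decide : Odd 9).mul ht.2
  have hcast : ((6 * n + 3 : ℕ) : ℤ) = ((3 : ℕ) : ℤ) * ((m : ℕ) : ℤ) := by
    push_cast [hm]; ring
  rw [hcast, jacobiSym.mul_left]
  have h3 : (jacobiSym ((3 : ℕ) : ℤ) p) = -1 := by
    rw [jacobiSym.quadratic_reciprocity (by decide : Odd 3) hpo]
    have hp3 : ((p : ℤ)) % ((3 : ℕ) : ℤ) = 1 % ((3 : ℕ) : ℤ) := by
      have : p % 3 = 1 := by omega
      push_cast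
      omega
    rw [jacobiSym.mod_left' hp3, jacobiSym.one_left]
    simp only [Nat.div_self, show (3 : ℕ) / 2 = 1 from rfl, one_mul, mul_one]
    exact hhodd.neg_one_pow
  have hm1 : 1 < m := by omega
  have hmmod : p % m = 1 := by
    have h1 : p = 1 + 18 * m * m := by rw [hpd]; ring
    rw [h1, Nat.add_mul_mod_self_right, Nat.mod_eq_of_lt hm1]
  have hmj : (jacobiSym ((m : ℕ) : ℤ) p) = (-1) ^ n := by
    rw [jacobiSym.quadratic_reciprocity hmo hpo]
    have hpm : ((p : ℤ)) % ((m : ℕ) : ℤ) = 1 % ((m : ℕ) : ℤ) := by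
      have h2 : (1 : ℤ) % (m : ℤ) = 1 := by
        rw [Int.emod_eq_of_lt (by norm_num) (by exact_mod_cast hm1)]
      rw [← Int.natCast_mod, hmmod, Nat.cast_one, h2]
    rw [jacobiSym.mod_left' hpm, jacobiSym.one_left, mul_one]
    have hmd : m / 2 = n := by omega
    rw [hmd, mul_comm n (p / 2), pow_mul, hhodd.neg_one_pow]
  rw [h3, hmj, pow_succ]
  ring
end
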